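/- Let E be a directed graph and G_E its graph groupoid. Then G_E is topologically transitive (for every pair of nonempty open subsets U,V of the unit space G_E⁰ there exists γ∈G_E with d(γ)∈U and r(γ)∈V) if and only if E is downward directed, i.e., for every pair of vertices u,v∈E⁰ there is a vertex w∈E⁰ such that there are paths from u to w and from v to w. -/

import Mathlib

open Set

section Graph

variable {V E : Type*} (gs gr : E → V)

/-- `(v, l)` is a finite path of the directed graph with source map `gs` and range map
`gr`: the edges of `l` compose (`gr eᵢ = gs eᵢ₊₁`) and start at `v` (`l = []` gives the
path of length zero at `v`). -/
def IsPathL (v : V) (l : List E) : Prop :=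
  (∀ e ∈ l.head?, gs e = v) ∧ l.Chain' fun a b => gr a = gs b

/-- The range vertex of the finite path `(v, l)`. -/
def pathRng (v : V) (l : List E) : V := l.foldl (fun _ e => gr e) v

/-- A vertex is regular if it emits at least one and at most finitely many edges. -/
def RegularVert (v : V) : Prop :=
  {e : E | gs e = v}.Finite ∧ {e : E | gs e = v}.Nonempty

/-- A boundary path: either a finite path whose range is not a regular vertex, or an
infinite path (an infinite composable sequence of edges). -/
def IsBoundary : (V × List E) ⊕ (ℕ → E) → Prop
  | .inl (v, l) => IsPathL gs gr v l ∧ ¬ RegularVert gs (pathRng gr v l)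
  | .inr f => ∀ n, gr (f n) = gs (f (n + 1))

/-- The boundary path space `X` of the graph: the unit space of the graph groupoid. -/
def BPath := {x : (V × List E) ⊕ (ℕ → E) // IsBoundary gs gr x}

/-- The boundary path `x` starts with the finite path `(w, m)`. -/
def HasPrefixP (w : V) (m : List E) (x : BPath gs gr) : Prop :=
  match x.1 with
  | .inl (v, l) => v = w ∧ m <+: l
  | .inr f => (m = [] → gs (f 0) = w) ∧ (∀ e ∈ m.head?, gs e = w) ∧
      ∀ (i : ℕ) (h : i < m.length), f i = m.get ⟨i, h⟩

/-- The cylinder set `Z(μ) = {μ x : x ∈ X}` of a finite path `μ = (w, m)`. -/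
def ZP (w : V) (m : List E) : Set (BPath gs gr) := {x | HasPrefixP gs gr w m x}

/-- The topology on the boundary path space `X = G_E⁰`, with basic compact open sets
`Z(μ∖F) = Z(μ) ∖ ⋃_{e ∈ F} Z(μe)` for finite sets `F` of edges with source `r(μ)`. -/
def unitTop : TopologicalSpace (BPath gs gr) :=
  TopologicalSpace.generateFrom
    {A | ∃ (w : V) (m : List E) (F : Set E), F.Finite ∧ IsPathL gs gr w m ∧
      (∀ e ∈ F, gs e = pathRng gr w m) ∧
      A = ZP gs gr w m \ ⋃ e ∈ F, ZP gs gr w (m ++ [e])}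

/-- `x` and `y` have a common tail: removing the first `m` edges of `x` and the first
`n` edges of `y` yields the same boundary path. -/
def AgreeFrom (m n : ℕ) (x y : BPath gs gr) : Prop :=
  match x.1, y.1 with
  | .inl (v, l), .inl (w, t) =>
      m ≤ l.length ∧ n ≤ t.length ∧
      pathRng gr v (l.take m) = pathRng gr w (t.take n) ∧ l.drop m = t.drop n
  | .inr f, .inr g => ∀ i : ℕ, f (m + i) = g (n + i)
  | _, _ => False

/-- The graph groupoid `G_E = {(αx, |α| − |β|, βx)}`, as triples `(x, k, y)` of
boundary paths `x, y` having a common tail, with `k` the difference of the lengths of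
the removed prefixes.  Here `r (x,k,y) = x` and `d (x,k,y) = y`; composition is
`(x,k,y)(y,l,z) = (x,k+l,z)` and inversion `(x,k,y)⁻¹ = (y,−k,x)`. -/
def GrGpd := {γ : BPath gs gr × ℤ × BPath gs gr //
  ∃ m n : ℕ, AgreeFrom gs gr m n γ.1 γ.2.2 ∧ γ.2.1 = (m : ℤ) - (n : ℤ)}

/-- The basic bisection `Z(μ, ν) = {(μz, |μ|−|ν|, νz)}` of the graph groupoid. -/
def ZZ (u : V) (p : List E) (w : V) (q : List E) : Set (GrGpd gs gr) :=
  {γ | HasPrefixP gs gr u p γ.1.1 ∧ HasPrefixP gs gr w q γ.1.2.2 ∧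
    γ.1.2.1 = (p.length : ℤ) - (q.length : ℤ) ∧
    AgreeFrom gs gr p.length q.length γ.1.1 γ.1.2.2}

/-- The topology of the graph groupoid `G_E`, with basic compact open bisections
`Z((μ,ν)∖F) = Z(μ,ν) ∖ ⋃_{α ∈ F} Z(μα, να)`, making it a Hausdorff ample groupoid. -/
def gpdTop : TopologicalSpace (GrGpd gs gr) :=
  TopologicalSpace.generateFrom
    {A | ∃ (u : V) (p : List E) (w : V) (q : List E) (F : Set (List E)), F.Finite ∧
      IsPathL gs gr u p ∧ IsPathL gs gr w q ∧ pathRng gr u p = pathRng gr w q ∧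
      (∀ α ∈ F, IsPathL gs gr (pathRng gr u p) α) ∧
      A = ZZ gs gr u p w q \ ⋃ α ∈ F, ZZ gs gr u (p ++ α) w (q ++ α)}

/-- A cycle: a nonempty closed path whose edges have pairwise distinct sources. -/
def IsCycleP (v : V) (l : List E) : Prop :=
  IsPathL gs gr v l ∧ l ≠ [] ∧ pathRng gr v l = v ∧ (l.map gs).Nodup

/-- The path `l` has an exit: some edge `e` shares its source with an edge of `l` but
differs from it. -/
def HasExitP (l : List E) : Prop := ∃ e a : E, a ∈ l ∧ gs e = gs a ∧ e ≠ a

end Graph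

/-! Every vertex starts a boundary path: follow chosen edges while the current vertex is
regular. Prepending paths to one boundary path from `w` gives boundary paths in `Z(μα)` and
`Z(νβ)` with a common tail whenever `α`, `β` run from `r(μ)`, `r(ν)` to `w`. Every nonempty open
set of the boundary path space contains a cylinder `Z(μ)`: the sets `Z(μ) ∖ ⋃_{e ∈ F} Z(μe)`
form a base at each point, and such a set contains `Z(μe)` for an edge `e ∉ F` out of `r(μ)`,
or is `Z(μ)` itself when `r(μ)` is a sink. So downward directedness gives transitivity.
Conversely, transitivity applied to `Z(u)` and `Z(v)` gives boundary paths from `u` and `v`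
with a common tail, and their prefixes before the tail are paths to a common vertex. -/

section BoundaryPaths

variable {V E : Type*} {gs gr : E → V}

@[simp] lemma pathRng_nil (v : V) : pathRng gr v ([] : List E) = v := rfl

lemma pathRng_append (v : V) (a b : List E) :
    pathRng gr v (a ++ b) = pathRng gr (pathRng gr v a) b :=
  List.foldl_append

@[simp] lemma pathRng_concat (v : V) (a : List E) (e : E) : pathRng gr v (a ++ [e]) = gr e := by
  simp [pathRng]

lemma isPathL_iff {v : V} {l : List E} :
    IsPathL gs gr v l ↔ (∀ e ∈ l.head?, gs e = v) ∧ l.IsChain fun a b => gr a = gs b :=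
  Iff.rfl

lemma isPathL_nil (v : V) : IsPathL gs gr v [] := ⟨by simp, List.isChain_nil⟩

lemma pathRng_eq_of_getLast?_eq {v : V} {a : List E} {e : E} (he : a.getLast? = some e) :
    pathRng gr v a = gr e := by
  obtain ⟨a', rfl⟩ := List.getLast?_eq_some_iff.mp he
  exact pathRng_concat v a' e

lemma isPathL_append_iff {v : V} {a b : List E} :
    IsPathL gs gr v (a ++ b) ↔ IsPathL gs gr v a ∧ IsPathL gs gr (pathRng gr v a) b := by
  by_cases ha : a = []
  · subst ha
    simp [isPathL_iff]
  · have hlast := List.getLast?_eq_some_getLast ha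
    simp only [isPathL_iff, List.isChain_append, List.head?_append_of_ne_nil _ ha, hlast,
      pathRng_eq_of_getLast?_eq hlast, Option.mem_some_iff]
    grind

lemma isPathL_concat_iff {v : V} {a : List E} {e : E} :
    IsPathL gs gr v (a ++ [e]) ↔ IsPathL gs gr v a ∧ gs e = pathRng gr v a := by
  rw [isPathL_append_iff]
  simp [isPathL_iff]

lemma IsPathL.prefix {v : V} {l m : List E} (hl : IsPathL gs gr v l) (hm : m <+: l) :
    IsPathL gs gr v m := by
  obtain ⟨r, rfl⟩ := hm
  exact (isPathL_append_iff.mp hl).1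

lemma pathRng_map_range {f : ℕ → E} (hf : ∀ n, gr (f n) = gs (f (n + 1))) (n : ℕ) :
    pathRng gr (gs (f 0)) ((List.range n).map f) = gs (f n) := by
  induction n with
  | zero => rfl
  | succ n _ => rw [List.range_succ, List.map_append, List.map_singleton, pathRng_concat, hf]

lemma isPathL_map_range {f : ℕ → E} (hf : ∀ n, gr (f n) = gs (f (n + 1))) (n : ℕ) :
    IsPathL gs gr (gs (f 0)) ((List.range n).map f) := by
  induction n with
  | zero => exact isPathL_nil _
  | succ n ih =>
    rw [List.range_succ, List.map_append, List.map_singleton, isPathL_concat_iff,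
      pathRng_map_range hf]
    exact ⟨ih, rfl⟩

def BPath.start (x : BPath gs gr) : V :=
  match x.1 with
  | .inl (v, _) => v
  | .inr f => gs (f 0)

lemma hasPrefixP_inl_iff {w v : V} {m l : List E} {hx} :
    HasPrefixP gs gr w m (⟨.inl (v, l), hx⟩ : BPath gs gr) ↔ v = w ∧ m <+: l :=
  Iff.rfl

lemma hasPrefixP_inr_iff {w : V} {m : List E} {f : ℕ → E} {hx} :
    HasPrefixP gs gr w m (⟨.inr f, hx⟩ : BPath gs gr) ↔
      gs (f 0) = w ∧ (List.range m.length).map f = m := by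
  show ((m = [] → _) ∧ _ ∧ _) ↔ _
  constructor
  · rintro ⟨hnil, hhead, hget⟩
    refine ⟨?_, List.ext_getElem (by simp) fun i _ hi => by simpa using hget i hi⟩
    rcases m with _ | ⟨a, m⟩
    · exact hnil rfl
    · rw [hget 0 (by simp)]
      exact hhead a rfl
  · rintro ⟨h0, hm⟩
    obtain ⟨n, rfl⟩ : ∃ n, m = (List.range n).map f := ⟨_, hm.symm⟩
    refine ⟨fun _ => h0, ?_, by simp⟩
    cases n <;> simp [List.range_succ_eq_map, h0]

namespace HasPrefixP

variable {w w' : V} {m m' : List E} {x : BPath gs gr}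

lemma start_eq (h : HasPrefixP gs gr w m x) : x.start = w := by
  rcases x with ⟨⟨v, l⟩ | f, hx⟩
  · exact (hasPrefixP_inl_iff.mp h).1
  · exact (hasPrefixP_inr_iff.mp h).1

lemma mono (hm : m' <+: m) (h : HasPrefixP gs gr w m x) : HasPrefixP gs gr w m' x := by
  rcases x with ⟨⟨v, l⟩ | f, hx⟩
  · exact ⟨h.1, hm.trans h.2⟩
  · obtain ⟨h0, hf⟩ := hasPrefixP_inr_iff.mp h
    refine hasPrefixP_inr_iff.mpr ⟨h0, ?_⟩
    rw [List.prefix_iff_eq_take.mp hm, ← hf, ← List.map_take, List.take_range]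
    simp

lemma prefix_of_length_le (h : HasPrefixP gs gr w m x) (h' : HasPrefixP gs gr w' m' x)
    (hlen : m.length ≤ m'.length) : m <+: m' := by
  rcases x with ⟨⟨v, l⟩ | f, hx⟩
  · exact List.prefix_of_prefix_length_le h.2 h'.2 hlen
  · rw [← (hasPrefixP_inr_iff.mp h).2, ← (hasPrefixP_inr_iff.mp h').2]
    refine List.IsPrefix.map f ?_
    rw [List.prefix_iff_eq_take, List.take_range, List.length_range, min_eq_left hlen]

lemma isPathL (h : HasPrefixP gs gr w m x) : IsPathL gs gr w m := by
  rcases x with ⟨⟨v, l⟩ | f, hx⟩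
  · obtain ⟨rfl, hm⟩ := hasPrefixP_inl_iff.mp h
    exact (hx : IsPathL gs gr _ l ∧ _).1.prefix hm
  · obtain ⟨rfl, hf⟩ := hasPrefixP_inr_iff.mp h
    rw [← hf]
    exact isPathL_map_range hx _

lemma eq_inl_or_exists_append (h : HasPrefixP gs gr w m x) :
    x.1 = .inl (w, m) ∨ ∃ e, HasPrefixP gs gr w (m ++ [e]) x := by
  rcases x with ⟨⟨v, l⟩ | f, hx⟩
  · obtain ⟨rfl, r, rfl⟩ := hasPrefixP_inl_iff.mp h
    rcases r with _ | ⟨e, r⟩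
    · simp
    · exact .inr ⟨e, rfl, by simp⟩
  · obtain ⟨h0, hf⟩ := hasPrefixP_inr_iff.mp h
    refine .inr ⟨f m.length, hasPrefixP_inr_iff.mpr ⟨h0, ?_⟩⟩
    rw [List.length_append, List.length_singleton, List.range_succ, List.map_append, hf]
    rfl

end HasPrefixP

lemma hasPrefixP_nil_iff {w : V} {x : BPath gs gr} :
    HasPrefixP gs gr w [] x ↔ x.start = w := by
  rcases x with ⟨⟨v, l⟩ | f, hx⟩
  · simp [hasPrefixP_inl_iff, BPath.start]
  · simp [hasPrefixP_inr_iff, BPath.start]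

variable (gs gr) in
open Classical in
noncomputable def nextVert (w : V) : V :=
  if h : RegularVert gs w then gr h.2.some else w

lemma exists_isPathL_pathRng_eq_nextVert_iterate (v : V) (n : ℕ) :
    ∃ l, IsPathL gs gr v l ∧ pathRng gr v l = (nextVert gs gr)^[n] v := by
  induction n with
  | zero => exact ⟨[], isPathL_nil v, rfl⟩
  | succ n ih =>
    obtain ⟨l, hl, hr⟩ := ih
    rw [Function.iterate_succ_apply', nextVert]
    split_ifs with hreg
    · exact ⟨l ++ [hreg.2.some], isPathL_concat_iff.mpr ⟨hl, hreg.2.some_mem.trans hr.symm⟩,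
        pathRng_concat _ _ _⟩
    · exact ⟨l, hl, hr⟩

lemma BPath.exists_start_eq (v : V) : ∃ x : BPath gs gr, x.start = v := by
  by_cases hreg : ∀ n, RegularVert gs ((nextVert gs gr)^[n] v)
  · set f : ℕ → E := fun n => (hreg n).2.some
    have hf : ∀ n, gs (f n) = (nextVert gs gr)^[n] v := fun n => (hreg n).2.some_mem
    have hb : IsBoundary gs gr (.inr f) := fun n => by
      rw [hf, Function.iterate_succ_apply', nextVert, dif_pos (hreg n)]
    exact ⟨⟨.inr f, hb⟩, hf 0⟩
  · obtain ⟨n, hn⟩ := not_forall.mp hreg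
    obtain ⟨l, hl, hr⟩ := exists_isPathL_pathRng_eq_nextVert_iterate (gs := gs) v n
    exact ⟨⟨.inl (v, l), hl, hr ▸ hn⟩, rfl⟩

namespace BPath

variable {v u : V} {l t : List E}

def prependData (v : V) (l : List E) : (V × List E) ⊕ (ℕ → E) → (V × List E) ⊕ (ℕ → E)
  | .inl (_, s) => .inl (v, l ++ s)
  | .inr f => .inr fun n => l.getD n (f (n - l.length))

lemma isBoundary_prependData (hl : IsPathL gs gr v l) {x : BPath gs gr}
    (hx : x.start = pathRng gr v l) : IsBoundary gs gr (prependData v l x.1) := by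
  rcases x with ⟨⟨w, s⟩ | f, hb⟩
  · obtain ⟨hs, hreg⟩ := (hb : IsPathL gs gr w s ∧ ¬ RegularVert gs (pathRng gr w s))
    change w = _ at hx
    subst hx
    exact ⟨isPathL_append_iff.mpr ⟨hl, hs⟩, by rwa [pathRng_append]⟩
  · change gs (f 0) = _ at hx
    intro n
    change gr (l.getD n _) = gs (l.getD (n + 1) _)
    rcases lt_trichotomy (n + 1) l.length with h | h | h
    · rw [List.getD_eq_getElem _ _ h, List.getD_eq_getElem _ _ (by omega)]
      exact List.isChain_iff_getElem.mp hl.2 n h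
    · rw [List.getD_eq_getElem _ _ (by omega), List.getD_eq_default _ _ h.ge, h, Nat.sub_self, hx]
      exact (pathRng_eq_of_getLast?_eq (by simp [List.getLast?_eq_getElem?, ← h])).symm
    · rw [List.getD_eq_default _ _ (by omega), List.getD_eq_default _ _ (by omega),
        Nat.sub_add_comm (by omega)]
      exact hb _

def prepend (hl : IsPathL gs gr v l) (x : BPath gs gr) (hx : x.start = pathRng gr v l) :
    BPath gs gr :=
  ⟨prependData v l x.1, isBoundary_prependData hl hx⟩

lemma hasPrefixP_prepend (hl : IsPathL gs gr v l) {x : BPath gs gr}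
    (hx : x.start = pathRng gr v l) : HasPrefixP gs gr v l (prepend hl x hx) := by
  rcases x with ⟨⟨w, s⟩ | f, hb⟩
  · exact ⟨rfl, List.prefix_append l s⟩
  · refine hasPrefixP_inr_iff.mpr ⟨?_, List.ext_getElem (by simp) fun i _ hi => ?_⟩
    · rcases l with _ | ⟨a, l⟩
      · exact hx
      · exact hl.1 a rfl
    · simpa using List.getD_eq_getElem l (f (i - l.length)) hi

lemma agreeFrom_prepend_prepend (hl : IsPathL gs gr v l) (ht : IsPathL gs gr u t)
    {x : BPath gs gr} (hxl : x.start = pathRng gr v l) (hxt : x.start = pathRng gr u t) :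
    AgreeFrom gs gr l.length t.length (prepend hl x hxl) (prepend ht x hxt) := by
  rcases x with ⟨⟨w, s⟩ | f, hb⟩
  · refine ⟨by simp, by simp, ?_, by simp⟩
    simpa [List.take_left] using hxl.symm.trans hxt
  · intro i
    change l.getD _ _ = t.getD _ _
    rw [List.getD_eq_default _ _ (by omega), List.getD_eq_default _ _ (by omega)]
    simp

end BPath

lemma AgreeFrom.exists_pathRng_eq {m n : ℕ} {x y : BPath gs gr}
    (h : AgreeFrom gs gr m n x y) :
    ∃ l t, IsPathL gs gr x.start l ∧ IsPathL gs gr y.start t ∧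
      pathRng gr x.start l = pathRng gr y.start t := by
  rcases x with ⟨⟨v, l⟩ | f, hx⟩ <;> rcases y with ⟨⟨w, t⟩ | g, hy⟩
  · exact ⟨l.take m, t.take n, (hx : IsPathL gs gr v l ∧ _).1.prefix (List.take_prefix m l),
      (hy : IsPathL gs gr w t ∧ _).1.prefix (List.take_prefix n t), h.2.2.1⟩
  · exact h.elim
  · exact h.elim
  · refine ⟨(List.range m).map f, (List.range n).map g, isPathL_map_range hx m,
      isPathL_map_range hy n, ?_⟩
    change pathRng gr (gs (f 0)) _ = pathRng gr (gs (g 0)) _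
    rw [pathRng_map_range hx, pathRng_map_range hy]
    simpa using congrArg gs (h 0)

section Topology

variable {w w' : V} {m m' : List E} {F F' : Set E}
  {x : BPath gs gr}

variable (gs gr) in
def basicSet (w : V) (m : List E) (F : Set E) : Set (BPath gs gr) :=
  ZP gs gr w m \ ⋃ e ∈ F, ZP gs gr w (m ++ [e])

lemma zp_append_subset_basicSet {e : E} (he : e ∉ F) :
    ZP gs gr w (m ++ [e]) ⊆ basicSet gs gr w m F := by
  intro y hy
  refine ⟨hy.mono (List.prefix_append m [e]), ?_⟩
  simp only [Set.mem_iUnion]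
  rintro ⟨e', he', hy'⟩
  obtain rfl : e' = e := by
    simpa using (hy'.prefix_of_length_le hy (by simp)).eq_of_length (by simp)
  exact he he'

lemma basicSet_inter_basicSet :
    basicSet gs gr w m F ∩ basicSet gs gr w m F' = basicSet gs gr w m (F ∪ F') := by
  ext y
  simp only [basicSet, Set.mem_inter_iff, Set.mem_sdiff, Set.mem_iUnion, Set.mem_union,
    not_exists, or_imp, forall_and]
  tauto

lemma exists_basicSet_subset_inter (hF : F.Finite) (hF' : F'.Finite)
    (hx : x ∈ basicSet gs gr w m F) (hx' : x ∈ basicSet gs gr w' m' F') :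
    ∃ w'' m'' F'', F''.Finite ∧ x ∈ basicSet gs gr w'' m'' F'' ∧
      basicSet gs gr w'' m'' F'' ⊆ basicSet gs gr w m F ∩ basicSet gs gr w' m' F' := by
  wlog hlen : m.length ≤ m'.length generalizing w w' m m' F F'
  · obtain ⟨w'', m'', F'', hF'', hx'', hsub⟩ := this hF' hF hx' hx (by omega)
    exact ⟨w'', m'', F'', hF'', hx'', Set.inter_comm _ _ ▸ hsub⟩
  obtain rfl : w = w' := hx.1.start_eq.symm.trans hx'.1.start_eq
  obtain ⟨r, rfl⟩ := hx.1.prefix_of_length_le hx'.1 hlen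
  rcases r with _ | ⟨e, r⟩
  · rw [List.append_nil] at hx' ⊢
    rw [basicSet_inter_basicSet]
    exact ⟨w, m, F ∪ F', hF.union hF', basicSet_inter_basicSet ▸ ⟨hx, hx'⟩, subset_rfl⟩
  · have he : e ∉ F := fun he =>
      hx.2 (Set.mem_biUnion he (hx'.1.mono (by simp [List.prefix_append_right_inj])))
    refine ⟨w, m ++ e :: r, F', hF', hx', fun y hy => ⟨?_, hy⟩⟩
    exact zp_append_subset_basicSet he (hy.1.mono (by simp [List.prefix_append_right_inj]))

lemma exists_basicSet_subset_of_isOpen {U : Set (BPath gs gr)}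
    (hU : @IsOpen _ (unitTop gs gr) U) (hx : x ∈ U) :
    ∃ w m F, F.Finite ∧ x ∈ basicSet gs gr w m F ∧ basicSet gs gr w m F ⊆ U := by
  have hU' : TopologicalSpace.GenerateOpen _ U := hU
  clear hU
  induction hU' generalizing x with
  | basic A hA =>
    obtain ⟨w, m, F, hF, -, -, rfl⟩ := hA
    exact ⟨w, m, F, hF, hx, subset_rfl⟩
  | univ =>
    exact ⟨x.start, [], ∅, Set.finite_empty, ⟨hasPrefixP_nil_iff.mpr rfl, by simp⟩,
      Set.subset_univ _⟩
  | inter U U' _ _ ih ih' =>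
    obtain ⟨w, m, F, hF, hxB, hBU⟩ := ih hx.1
    obtain ⟨w', m', F', hF', hxB', hBU'⟩ := ih' hx.2
    obtain ⟨w'', m'', F'', hF'', hxB'', hsub⟩ := exists_basicSet_subset_inter hF hF' hxB hxB'
    exact ⟨w'', m'', F'', hF'', hxB'', hsub.trans (Set.inter_subset_inter hBU hBU')⟩
  | sUnion S _ ih =>
    obtain ⟨U, hU, hxU⟩ := hx
    obtain ⟨w, m, F, hF, hxB, hBU⟩ := ih U hU hxU
    exact ⟨w, m, F, hF, hxB, hBU.trans (Set.subset_sUnion_of_mem hU)⟩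

lemma exists_isPathL_zp_subset_basicSet (hF : F.Finite) (hx : x ∈ basicSet gs gr w m F) :
    ∃ κ, IsPathL gs gr w κ ∧ ZP gs gr w κ ⊆ basicSet gs gr w m F := by
  rcases hx.1.eq_inl_or_exists_append with hxm | ⟨e, hxe⟩
  · -- `x` is the finite path `m`, so `r(m)` is a sink or emits infinitely many edges
    obtain ⟨hm, hsing⟩ : IsPathL gs gr w m ∧ ¬ RegularVert gs (pathRng gr w m) := by
      have hb := x.2
      rw [hxm] at hb
      exact hb
    by_cases hfin : {e | gs e = pathRng gr w m}.Finite
    · refine ⟨m, hm, fun y hy => ⟨hy, ?_⟩⟩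
      simp only [Set.mem_iUnion]
      rintro ⟨e, -, hye⟩
      exact hsing ⟨hfin, e, (isPathL_concat_iff.mp hye.isPathL).2⟩
    · obtain ⟨e, he, heF⟩ := (Set.Infinite.sdiff hfin hF).nonempty
      exact ⟨m ++ [e], isPathL_concat_iff.mpr ⟨hm, he⟩, zp_append_subset_basicSet heF⟩
  · exact ⟨m ++ [e], hxe.isPathL,
      zp_append_subset_basicSet fun he => hx.2 (Set.mem_biUnion he hxe)⟩

lemma exists_isPathL_zp_subset_of_isOpen {U : Set (BPath gs gr)}
    (hU : @IsOpen _ (unitTop gs gr) U) (hne : U.Nonempty) :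
    ∃ w κ, IsPathL gs gr w κ ∧ ZP gs gr w κ ⊆ U := by
  obtain ⟨x, hx⟩ := hne
  obtain ⟨w, m, F, hF, hxB, hBU⟩ := exists_basicSet_subset_of_isOpen hU hx
  obtain ⟨κ, hκ, hκB⟩ := exists_isPathL_zp_subset_basicSet hF hxB
  exact ⟨w, κ, hκ, hκB.trans hBU⟩

lemma isOpen_zp_nil (w : V) : @IsOpen _ (unitTop gs gr) (ZP gs gr w []) :=
  TopologicalSpace.GenerateOpen.basic _ ⟨w, [], ∅, Set.finite_empty, isPathL_nil w, by simp,
    by simp⟩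

end Topology

lemma exists_agreeFrom_of_pathRng_eq {v u : V} {l t : List E}
    (hl : IsPathL gs gr v l) (ht : IsPathL gs gr u t) (h : pathRng gr v l = pathRng gr u t) :
    ∃ x ∈ ZP gs gr v l, ∃ y ∈ ZP gs gr u t, AgreeFrom gs gr l.length t.length x y := by
  obtain ⟨z, hz⟩ := BPath.exists_start_eq (gs := gs) (gr := gr) (pathRng gr v l)
  exact ⟨_, BPath.hasPrefixP_prepend hl hz, _, BPath.hasPrefixP_prepend ht (hz.trans h),
    BPath.agreeFrom_prepend_prepend hl ht hz (hz.trans h)⟩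

end BoundaryPaths

/-- The graph groupoid `G_E` is topologically transitive — for all
nonempty open `U, V ⊆ G_E⁰` there is `γ ∈ G_E` with `d γ ∈ U` and `r γ ∈ V` (i.e.
there are `x ∈ V` and `y ∈ U` with a common tail) — if and only if `E` is downward
directed: any two vertices `u, v` admit paths from `u` and from `v` to a common
vertex `w`. -/
theorem graph_groupoid_topologically_transitive_iff {V E : Type*} (gs gr : E → V) :
    (∀ U W : Set (BPath gs gr), @IsOpen _ (unitTop gs gr) U →
      @IsOpen _ (unitTop gs gr) W → U.Nonempty → W.Nonempty →
      ∃ x ∈ W, ∃ y ∈ U, ∃ m n : ℕ, AgreeFrom gs gr m n x y) ↔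
    (∀ u v : V, ∃ (w : V) (l t : List E),
      IsPathL gs gr u l ∧ pathRng gr u l = w ∧
      IsPathL gs gr v t ∧ pathRng gr v t = w) := by
  constructor
  · intro htrans u v
    obtain ⟨xu, hxu⟩ := BPath.exists_start_eq (gs := gs) (gr := gr) u
    obtain ⟨xv, hxv⟩ := BPath.exists_start_eq (gs := gs) (gr := gr) v
    obtain ⟨x, hx, y, hy, m, n, hxy⟩ := htrans _ _ (isOpen_zp_nil v) (isOpen_zp_nil u)
      ⟨xv, hasPrefixP_nil_iff.mpr hxv⟩ ⟨xu, hasPrefixP_nil_iff.mpr hxu⟩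
    obtain ⟨l, t, hl, ht, hlt⟩ := hxy.exists_pathRng_eq
    obtain rfl := hasPrefixP_nil_iff.mp hx
    obtain rfl := hasPrefixP_nil_iff.mp hy
    exact ⟨_, l, t, hl, rfl, ht, hlt.symm⟩
  · intro hdir U W hU hW hUne hWne
    obtain ⟨a, μ, hμ, hμU⟩ := exists_isPathL_zp_subset_of_isOpen hU hUne
    obtain ⟨b, ν, hν, hνW⟩ := exists_isPathL_zp_subset_of_isOpen hW hWne
    obtain ⟨c, l, t, hl, rfl, ht, htl⟩ := hdir (pathRng gr b ν) (pathRng gr a μ)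
    obtain ⟨x, hx, y, hy, hxy⟩ := exists_agreeFrom_of_pathRng_eq
      (isPathL_append_iff.mpr ⟨hν, hl⟩) (isPathL_append_iff.mpr ⟨hμ, ht⟩)
      (by rw [pathRng_append, pathRng_append, htl])
    exact ⟨x, hνW (hx.mono (List.prefix_append ν l)), y, hμU (hy.mono (List.prefix_append μ t)),
      _, _, hxy⟩
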